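/- Let R = ℤ[√3] be the ring of integers of ℚ(√3). Then the matrices A = [[−1, 2], [7, 1]] and B = [[0, 15], [1, 0]] (both with characteristic polynomial x² − 15, B being the companion matrix of x² − 15) are R-conjugate: there exists C ∈ R^{2×2} with det C a unit of R and A·C = C·B. -/

import Mathlib

/-!
For any `2 × 2` matrix `A` and vector `v`, the matrix `C = [v | A v]` satisfies
`A C = C B` with `B` the companion matrix of the characteristic polynomial of `A`
(Cayley–Hamilton), and `det C` is the binary quadratic form `7x² + 2xy − 2y²`
of discriminant `60` attached to `A = [[-1, 2], [7, 1]]`. This form does not represent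
`±1` over `ℤ`, but over `ℤ[√3]` it takes the unit value `7 + 4√3 = (2 + √3)²` at
`(1 + 2√3, −6)`.
-/

namespace Matrix

variable {R : Type*} [CommRing R]

def krylov (A : Matrix (Fin 2) (Fin 2) R) (v : Fin 2 → R) : Matrix (Fin 2) (Fin 2) R :=
  !![v 0, (A *ᵥ v) 0; v 1, (A *ᵥ v) 1]

theorem mul_krylov_eq (A : Matrix (Fin 2) (Fin 2) R) (v : Fin 2 → R) :
    A * krylov A v = krylov A v * !![0, -A.det; 1, A.trace] := by
  ext i j
  fin_cases i <;> fin_cases j <;>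
    simp only [krylov, mul_apply, mulVec, dotProduct, Fin.sum_univ_two, of_apply, cons_val',
      cons_val_zero, cons_val_one, cons_val_fin_one, Fin.zero_eta, Fin.mk_one, trace_fin_two,
      det_fin_two] <;>
    ring

theorem det_krylov (A : Matrix (Fin 2) (Fin 2) R) (v : Fin 2 → R) :
    (krylov A v).det = A 1 0 * v 0 ^ 2 + (A 1 1 - A 0 0) * v 0 * v 1 - A 0 1 * v 1 ^ 2 := by
  simp only [krylov, det_fin_two_of, mulVec, dotProduct, Fin.sum_univ_two]
  ring

theorem exists_isUnit_det_mul_eq_mul_companion (A : Matrix (Fin 2) (Fin 2) R) (v : Fin 2 → R)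
    (hv : IsUnit (A 1 0 * v 0 ^ 2 + (A 1 1 - A 0 0) * v 0 * v 1 - A 0 1 * v 1 ^ 2)) :
    ∃ C : Matrix (Fin 2) (Fin 2) R, IsUnit C.det ∧ A * C = C * !![0, -A.det; 1, A.trace] :=
  ⟨krylov A v, det_krylov A v ▸ hv, mul_krylov_eq A v⟩

end Matrix

open Matrix

/-- Over `R = ℤ[√3]`, the ring of integers of `ℚ(√3)`, the matrices
`A = [[-1,2],[7,1]]` and `B = [[0,15],[1,0]]` (both with characteristic polynomial
`x² − 15`) are `R`-conjugate. -/
theorem conjugate_over_Zsqrt3 :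
    ∃ C : Matrix (Fin 2) (Fin 2) (ℤ√3), IsUnit C.det ∧
      (!![-1, 2; 7, 1] : Matrix (Fin 2) (Fin 2) ℤ).map (Int.cast : ℤ → ℤ√3) * C
        = C * (!![0, 15; 1, 0] : Matrix (Fin 2) (Fin 2) ℤ).map (Int.cast : ℤ → ℤ√3) := by
  obtain ⟨C, hC, hAC⟩ := exists_isUnit_det_mul_eq_mul_companion
    ((!![-1, 2; 7, 1] : Matrix (Fin 2) (Fin 2) ℤ).map (Int.cast : ℤ → ℤ√3)) ![⟨1, 2⟩, -6]
    (by rw [Zsqrtd.isUnit_iff_norm_isUnit, Int.isUnit_iff]; decide)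
  refine ⟨C, hC, hAC.trans ?_⟩
  congr 1
  refine Matrix.ext fun i j => ?_
  fin_cases i <;> fin_cases j <;> norm_num [det_fin_two, trace_fin_two]
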